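/- arXiv:1011.1922 — 2 statements merged into one kernel-verified Lean document; each statement's English description precedes it below -/
import Mathlib

section
/- Let t ≥ 1 and let u_1,…,u_k ∈ ℂ^t be vectors that are linearly independent over ℝ (viewing ℂ^t as the real vector space ℝ^{2t}). Then there is a subset of {u_1,…,u_k} of cardinality ⌈k/2⌉ that is linearly independent over ℂ. -/
/-- Proposition 5.1: If `u_1, …, u_k ∈ ℂ^t` are linearly independent over
`ℝ` (viewing `ℂ^t` as `ℝ^{2t}` by restriction of scalars), then some `⌈k/2⌉` of them are
linearly independent over `ℂ`. -/
theorem stmt10 (t k : ℕ) (ht : 1 ≤ t)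
    (u : Fin k → EuclideanSpace ℂ (Fin t))
    (hu : LinearIndependent ℝ u) :
    ∃ s : Finset (Fin k), s.card = (k + 1) / 2 ∧
      LinearIndependent ℂ (fun i : s => u i) := by
  classical
  obtain ⟨b, hb_sub, hb_span, hb_li⟩ := exists_linearIndependent ℂ (Set.range u)
  have hbfin : b.Finite := (Set.finite_range u).subset hb_sub
  haveI : Fintype b := hbfin.fintype
  have hinj : Function.Injective u := hu.injective
  set T : Finset (Fin k) := Finset.univ.filter (fun i => u i ∈ b) with hT
  have himg : T.image u = hbfin.toFinset := by
    ext x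
    simp only [Finset.mem_image, hT, Finset.mem_filter, Finset.mem_univ, true_and,
      Set.Finite.mem_toFinset]
    constructor
    · rintro ⟨i, hi, rfl⟩; exact hi
    · intro hx; obtain ⟨i, rfl⟩ := hb_sub hx; exact ⟨i, hx, rfl⟩
  have hcardT : T.card = hbfin.toFinset.card := by
    rw [← himg, Finset.card_image_of_injective _ hinj]
  haveI : FiniteDimensional ℂ (Submodule.span ℂ b) :=
    FiniteDimensional.span_of_finite ℂ hbfin
  haveI : FiniteDimensional ℝ (Submodule.span ℂ b) :=
    FiniteDimensional.trans ℝ ℂ (Submodule.span ℂ b)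
  -- finrank over ℂ of the span is card b
  have h2 : Module.finrank ℂ (Submodule.span ℂ b) = hbfin.toFinset.card := by
    rw [finrank_span_set_eq_card hb_li, Set.toFinset_card, Set.Finite.card_toFinset]
  have h1 : Module.finrank ℝ (Submodule.span ℂ b) = 2 * hbfin.toFinset.card := by
    rw [← Module.finrank_mul_finrank ℝ ℂ (Submodule.span ℂ b), Complex.finrank_real_complex, h2]
  -- the real span of range u sits inside the complex span
  have hle : Submodule.span ℝ (Set.range u) ≤
      (Submodule.span ℂ b).restrictScalars ℝ := by
    rw [Submodule.span_le]
    intro x hx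
    have : x ∈ Submodule.span ℂ (Set.range u) := Submodule.subset_span hx
    rw [← hb_span] at this
    exact this
  haveI : FiniteDimensional ℝ ((Submodule.span ℂ b).restrictScalars ℝ) :=
    ((Submodule.restrictScalarsEquiv ℝ ℂ _ (Submodule.span ℂ b)).restrictScalars ℝ).symm.finiteDimensional
  have hk : k ≤ 2 * hbfin.toFinset.card := by
    have e1 : Module.finrank ℝ (Submodule.span ℝ (Set.range u)) = k := by
      rw [finrank_span_eq_card hu, Fintype.card_fin]
    have e2 : Module.finrank ℝ ((Submodule.span ℂ b).restrictScalars ℝ) =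
        2 * hbfin.toFinset.card := by
      rw [((Submodule.restrictScalarsEquiv ℝ ℂ _ (Submodule.span ℂ b)).restrictScalars ℝ).finrank_eq, h1]
    calc k = Module.finrank ℝ (Submodule.span ℝ (Set.range u)) := e1.symm
      _ ≤ Module.finrank ℝ ((Submodule.span ℂ b).restrictScalars ℝ) :=
          Submodule.finrank_mono hle
      _ = 2 * hbfin.toFinset.card := e2
  have hkT : (k + 1) / 2 ≤ T.card := by rw [hcardT]; omega
  obtain ⟨s, hsT, hs_card⟩ := Finset.exists_subset_card_eq hkT
  refine ⟨s, hs_card, ?_⟩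
  have hmem : ∀ i : s, u i ∈ b := by
    rintro ⟨i, hi⟩
    have := hsT hi
    simp only [hT, Finset.mem_filter] at this
    exact this.2
  let f : s → b := fun i => ⟨u i, hmem i⟩
  have hf : Function.Injective f := by
    rintro ⟨i, hi⟩ ⟨j, hj⟩ h
    have : u i = u j := congrArg Subtype.val h
    exact Subtype.ext (hinj this)
  have := hb_li.comp f hf
  exact this
end

section
/- Let n ≥ m ≥ 1 and let B_1,…,B_m be pairwise disjoint closed balls in ℝⁿ of positive radii whose centers are affinely independent; let μ_j denote Lebesgue measure restricted to B_j. If H(a_1,c_1),…,H(a_k,c_k) are hyperplanes whose unit normals a_1,…,a_k are linearly independent and each of which bisects every μ_j, then k ≤ n − m + 1. -/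
/-!
A hyperplane bisecting Lebesgue measure on a ball must pass through its center: the point
reflection through the center preserves the ball and its measure, so a hyperplane below the
center would leave the two half-balls cut off below it and above its mirror image with equal
mass, while the slab between them has positive measure. Hence every normal `aᵢ` is orthogonal
to the direction space of the affine span of the centers, which has dimension `m - 1`, and the
`k` independent normals fit into its `(n - m + 1)`-dimensional orthogonal complement.
-/

open MeasureTheory

noncomputable section

/-- The hyperplane `{u : ⟨u,a⟩ = c}` with unit normal `a` and offset `c` bisects the
measure `μ`: both closed half-spaces carry exactly half of the total mass. -/
def Bisects {n : ℕ} (a : EuclideanSpace ℝ (Fin n)) (c : ℝ)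
    (μ : Measure (EuclideanSpace ℝ (Fin n))) : Prop :=
  μ {u | c ≤ (inner ℝ u a : ℝ)} = μ Set.univ / 2 ∧
  μ {u | (inner ℝ u a : ℝ) ≤ c} = μ Set.univ / 2

open Metric Set
open scoped RealInnerProductSpace

section

variable {E : Type*} [NormedAddCommGroup E] [InnerProductSpace ℝ E]

theorem mem_orthogonal_vectorSpan_of_forall_inner_eq {s : Set E} {a : E} {c : ℝ}
    (h : ∀ x ∈ s, ⟪x, a⟫ = c) : a ∈ (vectorSpan ℝ s)ᗮ := by
  have hle : vectorSpan ℝ s ≤ (ℝ ∙ a)ᗮ := by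
    rw [vectorSpan_def, Submodule.span_le]
    rintro _ ⟨x, hx, y, hy, rfl⟩
    simp [Submodule.mem_orthogonal_singleton_iff_inner_left, inner_sub_left, h x hx, h y hy]
  exact fun u hu => Submodule.mem_orthogonal_singleton_iff_inner_left.mp (hle hu)

theorem card_add_card_le_finrank_add_one [FiniteDimensional ℝ E] {ι κ : Type*} [Fintype ι]
    [Fintype κ] {p : ι → E} (hp : AffineIndependent ℝ p) {a : κ → E}
    (ha : LinearIndependent ℝ a) {c : κ → ℝ} (h : ∀ i j, ⟪p j, a i⟫ = c i) :
    Fintype.card κ + Fintype.card ι ≤ Module.finrank ℝ E + 1 := by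
  rcases isEmpty_or_nonempty ι with _ | _
  · have := ha.fintype_card_le_finrank
    simp only [Fintype.card_of_isEmpty]
    omega
  set V := vectorSpan ℝ (range p)
  have hspan : Submodule.span ℝ (range a) ≤ Vᗮ := by
    rw [Submodule.span_le]
    rintro _ ⟨i, rfl⟩
    exact mem_orthogonal_vectorSpan_of_forall_inner_eq (by rintro _ ⟨j, rfl⟩; exact h i j)
  have hκ : Fintype.card κ ≤ Module.finrank ℝ Vᗮ := by
    simpa [finrank_span_eq_card ha] using Submodule.finrank_mono hspan
  have hι : Module.finrank ℝ V + 1 = Fintype.card ι := hp.finrank_vectorSpan_add_one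
  have hV := V.finrank_add_finrank_orthogonal
  omega

variable [FiniteDimensional ℝ E] [MeasurableSpace E] [BorelSpace E] (μ : Measure E)
  [μ.IsAddHaarMeasure]

theorem measurePreserving_sub_left_restrict_closedBall (p : E) (r : ℝ) :
    MeasurePreserving (fun u => p + p - u) (μ.restrict (closedBall p r))
      (μ.restrict (closedBall p r)) := by
  have hball : (fun u => p + p - u) ⁻¹' closedBall p r = closedBall p r := by
    ext u
    rw [mem_preimage, mem_closedBall, mem_closedBall, dist_eq_norm, dist_eq_norm,
      show p + p - u - p = -(u - p) by abel, norm_neg]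
  have := (Measure.measurePreserving_sub_left μ (p + p)).restrict_preimage
    (measurableSet_closedBall (x := p) (ε := r))
  rwa [hball] at this

theorem restrict_closedBall_setOf_inner_le_lt_half {p a : E} {r t : ℝ} (hr : 0 < r)
    (ht : t < ⟪p, a⟫) :
    μ.restrict (closedBall p r) {u | ⟪u, a⟫ ≤ t} < μ.restrict (closedBall p r) univ / 2 := by
  set ν := μ.restrict (closedBall p r)
  set s := 2 * ⟪p, a⟫ - t
  have hcont : Continuous fun u : E => ⟪u, a⟫ := continuous_id.inner continuous_const
  -- the point reflection through `p` swaps the half-spaces below `t` and above `s`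
  have hupper : ν {u | s ≤ ⟪u, a⟫} = ν {u | ⟪u, a⟫ ≤ t} := by
    have hpre : (fun u => p + p - u) ⁻¹' {u | s ≤ ⟪u, a⟫} = {u | ⟪u, a⟫ ≤ t} := by
      ext u
      simp only [mem_preimage, mem_ofPred_eq, inner_sub_left, inner_add_left, s]
      constructor <;> intro <;> linarith
    rw [← hpre, (measurePreserving_sub_left_restrict_closedBall μ p r).measure_preimage
      (measurableSet_le measurable_const hcont.measurable).nullMeasurableSet]
  have hslab : 0 < ν {u | t < ⟪u, a⟫ ∧ ⟪u, a⟫ < s} := by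
    have hopen : IsOpen ({u | t < ⟪u, a⟫ ∧ ⟪u, a⟫ < s} ∩ ball p r) :=
      ((isOpen_lt continuous_const hcont).inter (isOpen_lt hcont continuous_const)).inter
        isOpen_ball
    have hp : p ∈ {u | t < ⟪u, a⟫ ∧ ⟪u, a⟫ < s} ∩ ball p r :=
      ⟨⟨ht, by simp only [s]; linarith⟩, mem_ball_self hr⟩
    calc 0 < μ ({u | t < ⟪u, a⟫ ∧ ⟪u, a⟫ < s} ∩ ball p r) := hopen.measure_pos μ ⟨p, hp⟩
      _ ≤ ν {u | t < ⟪u, a⟫ ∧ ⟪u, a⟫ < s} := by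
        rw [Measure.restrict_apply' measurableSet_closedBall]
        exact measure_mono (inter_subset_inter_right _ ball_subset_closedBall)
  have hsum : ν {u | ⟪u, a⟫ ≤ t} + ν {u | t < ⟪u, a⟫ ∧ ⟪u, a⟫ < s} + ν {u | s ≤ ⟪u, a⟫}
      ≤ ν univ := by
    rw [← measure_union, ← measure_union]
    · exact measure_mono (subset_univ _)
    · refine disjoint_union_left.mpr ⟨?_, ?_⟩ <;>
        refine disjoint_left.mpr fun u h₁ h₂ => ?_ <;>
        simp only [mem_ofPred_eq, s] at h₁ h₂ <;> linarith
    · exact measurableSet_le measurable_const hcont.measurable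
    · exact disjoint_left.mpr fun u h₁ h₂ => by simp only [mem_ofPred_eq] at h₁ h₂; linarith
    · exact (measurableSet_lt measurable_const hcont.measurable).inter
        (measurableSet_lt hcont.measurable measurable_const)
  have hfin : ν univ ≠ ⊤ := by
    simpa [ν] using measure_closedBall_lt_top.ne
  have hlow : ν {u | ⟪u, a⟫ ≤ t} ≠ ⊤ :=
    ne_top_of_le_ne_top hfin (measure_mono (subset_univ _))
  rw [hupper] at hsum
  rw [ENNReal.lt_div_iff_mul_lt (by norm_num) (by norm_num), mul_two]
  exact (ENNReal.add_lt_add_right hlow (ENNReal.lt_add_right hlow hslab.ne')).trans_le hsum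

end

theorem inner_eq_of_bisects_closedBall {n : ℕ} {a p : EuclideanSpace ℝ (Fin n)} {c r : ℝ}
    (hr : 0 < r) (h : Bisects a c (volume.restrict (closedBall p r))) : ⟪p, a⟫ = c := by
  rcases lt_trichotomy ⟪p, a⟫ c with hlt | heq | hgt
  · have hneg : {u | ⟪u, -a⟫ ≤ -c} = {u | c ≤ ⟪u, a⟫} := by
      ext u
      simp only [mem_ofPred_eq, inner_neg_right, neg_le_neg_iff]
    have hlt' : -c < ⟪p, -a⟫ := by rw [inner_neg_right]; linarith
    have := restrict_closedBall_setOf_inner_le_lt_half volume hr hlt'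
    exact absurd h.1 (hneg ▸ this).ne
  · exact heq
  · exact absurd h.2 (restrict_closedBall_setOf_inner_le_lt_half volume hr hgt).ne

theorem stmt16_general (n m k : ℕ)
    (p : Fin m → EuclideanSpace ℝ (Fin n)) (rad : Fin m → ℝ)
    (hrad : ∀ j, 0 < rad j)
    (haff : AffineIndependent ℝ p)
    (a : Fin k → EuclideanSpace ℝ (Fin n)) (c : Fin k → ℝ)
    (hli : LinearIndependent ℝ a)
    (hbis : ∀ i j, Bisects (a i) (c i)
      (volume.restrict (Metric.closedBall (p j) (rad j)))) :
    k ≤ n - m + 1 := by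
  have hcenter : ∀ i j, ⟪p j, a i⟫ = c i := fun i j =>
    inner_eq_of_bisects_closedBall (hrad j) (hbis i j)
  have := card_add_card_le_finrank_add_one haff hli hcenter
  simp only [Fintype.card_fin, finrank_euclideanSpace_fin] at this
  omega

/-- Let `B_1,…,B_m` be pairwise disjoint closed balls of positive radii in
`ℝⁿ` with affinely independent centers, `μ_j` Lebesgue measure restricted to `B_j`. Any
family of hyperplanes with linearly independent unit normals, each bisecting every `μ_j`,
has at most `n − m + 1` members. -/
theorem stmt16 (n m k : ℕ) (hm : 1 ≤ m) (hmn : m ≤ n)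
    (p : Fin m → EuclideanSpace ℝ (Fin n)) (rad : Fin m → ℝ)
    (hrad : ∀ j, 0 < rad j)
    (hdisj : ∀ i j, i ≠ j →
      Disjoint (Metric.closedBall (p i) (rad i)) (Metric.closedBall (p j) (rad j)))
    (haff : AffineIndependent ℝ p)
    (a : Fin k → EuclideanSpace ℝ (Fin n)) (c : Fin k → ℝ)
    (hunit : ∀ i, ‖a i‖ = 1) (hli : LinearIndependent ℝ a)
    (hbis : ∀ i j, Bisects (a i) (c i)
      (volume.restrict (Metric.closedBall (p j) (rad j)))) :
    k ≤ n - m + 1 :=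
  stmt16_general n m k p rad hrad haff a c hli hbis
end
end
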